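/- arXiv:1605.08435 — 3 statements merged into one kernel-verified Lean document; each statement's English description precedes it below -/
import Mathlib

section
/- Let C be a triangulated category with a weight structure w, M an object of C, and j < i integers. Fix weight decompositions w_{≤j}M → M → w_{≥j+1}M and w_{≤i}M → M → w_{≥i+1}M (so w_{≤j}M ∈ C_{w≤j}, w_{≥j+1}M ∈ C_{w≥j+1}, and similarly for i). Then there exists a unique morphism c : w_{≤j}M → w_{≤i}M commuting with the two maps to M; moreover, the cone of c lies in C_{[j+1,i]} = C_{w≥j+1} ∩ C_{w≤i}. -/
open CategoryTheory CategoryTheory.Limits CategoryTheory.Pretriangulated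

universe v u v₂ u₂

/-- `X` is a retract of `Y`: the identity of `X` factors through `Y`. -/
def IsRetract {C : Type u} [Category.{v} C] (X Y : C) : Prop :=
  ∃ (i : X ⟶ Y) (r : Y ⟶ X), i ≫ r = 𝟙 X

variable (C : Type u) [Category.{v} C] [HasZeroObject C] [Preadditive C] [HasShift C ℤ]
  [∀ n : ℤ, (shiftFunctor C n).Additive] [Pretriangulated C]

/-- A weight structure on a triangulated category `C`, given by the classes
`LE = C_{w≤0}` and `GE = C_{w≥0}`. -/
structure WeightStructure where
  LE : Set C
  GE : Set C
  retract_mem_LE : ∀ ⦃X Y : C⦄, IsRetract X Y → Y ∈ LE → X ∈ LE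
  retract_mem_GE : ∀ ⦃X Y : C⦄, IsRetract X Y → Y ∈ GE → X ∈ GE
  shift_LE : ∀ X ∈ LE, X⟦(-1 : ℤ)⟧ ∈ LE
  shift_GE : ∀ X ∈ GE, X⟦(1 : ℤ)⟧ ∈ GE
  orthogonal : ∀ ⦃X Y : C⦄, X ∈ LE → Y ∈ GE → ∀ f : X ⟶ Y⟦(1 : ℤ)⟧, f = 0
  exists_decomp : ∀ M : C, ∃ (B A : C) (f : B ⟶ M) (g : M ⟶ A) (h : A ⟶ B⟦(1 : ℤ)⟧),
    (Triangle.mk f g h ∈ distTriang C) ∧ B ∈ LE ∧ A⟦(-1 : ℤ)⟧ ∈ GE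

namespace WeightStructure

variable {C}

/-- `C_{w≤n} = C_{w≤0}[n]`. -/
def le (w : WeightStructure C) (n : ℤ) : Set C := {X : C | X⟦(-n)⟧ ∈ w.LE}

/-- `C_{w≥n} = C_{w≥0}[n]`. -/
def ge (w : WeightStructure C) (n : ℤ) : Set C := {X : C | X⟦(-n)⟧ ∈ w.GE}

/-- `C_{w=n} = C_{w≤n} ∩ C_{w≥n}`. -/
def heart (w : WeightStructure C) (n : ℤ) : Set C := w.le n ∩ w.ge n

end WeightStructure

variable {C}

/-- The envelope of a class `D`: the smallest class containing `D` and all zero objects that is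
closed under extensions and retracts. -/
inductive Envelope (D : Set C) : C → Prop
  | of (X : C) (hX : X ∈ D) : Envelope D X
  | zero (Z : C) (hZ : IsZero Z) : Envelope D Z
  | ext (T : Triangle C) (hT : T ∈ distTriang C)
      (h₁ : Envelope D T.obj₁) (h₃ : Envelope D T.obj₃) : Envelope D T.obj₂
  | retract (X Y : C) (h : IsRetract X Y) (hY : Envelope D Y) : Envelope D X

/-!
The map `c` is a lift of `fj` along `fi`: it exists because `Hom(C_{w≤j}, C_{w≥i+1}) = 0`, and
it is unique because `Hom(C_{w≤j}, Ai⟦-1⟧) = 0` with `Ai⟦-1⟧ ∈ C_{w≥i} ⊆ C_{w≥j+1}`.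
The cone `Z` of `c` is an extension of `Bj⟦1⟧` by `Bi`, both of weight `≤ i`. For the lower
bound, `C_{w≥j+1}` is exactly the right orthogonal of `C_{w≤j}`, and maps from `X ∈ C_{w≤j}`
into `Z` vanish: `v` factors through `Aj ∈ C_{w≥j+1}`, so they come from `Hom(X, Bi)`, and
`- ≫ c` maps `Hom(X, Bj)` onto `Hom(X, Bi)` because `- ≫ fj` is onto `Hom(X, M)` while `- ≫ fi`
is injective.
-/

namespace WeightStructure

variable (w : WeightStructure C)

lemma mem_LE_of_iso {X Y : C} (e : X ≅ Y) (h : Y ∈ w.LE) : X ∈ w.LE :=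
  w.retract_mem_LE ⟨e.hom, e.inv, e.hom_inv_id⟩ h

lemma mem_GE_of_iso {X Y : C} (e : X ≅ Y) (h : Y ∈ w.GE) : X ∈ w.GE :=
  w.retract_mem_GE ⟨e.hom, e.inv, e.hom_inv_id⟩ h

lemma retract_mem_le {n : ℤ} {X Y : C} (h : IsRetract X Y) (hY : Y ∈ w.le n) : X ∈ w.le n := by
  obtain ⟨i, r, hir⟩ := h
  exact w.retract_mem_LE
    ⟨i⟦-n⟧', r⟦-n⟧', by rw [← Functor.map_comp, hir, CategoryTheory.Functor.map_id]⟩ hY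

lemma retract_mem_ge {n : ℤ} {X Y : C} (h : IsRetract X Y) (hY : Y ∈ w.ge n) : X ∈ w.ge n := by
  obtain ⟨i, r, hir⟩ := h
  exact w.retract_mem_GE
    ⟨i⟦-n⟧', r⟦-n⟧', by rw [← Functor.map_comp, hir, CategoryTheory.Functor.map_id]⟩ hY

lemma eq_zero_of_mem_le_of_mem_ge {n : ℤ} {X Y : C} (hX : X ∈ w.le n) (hY : Y ∈ w.ge (n + 1))
    (f : X ⟶ Y) : f = 0 := by
  let e := (shiftFunctorAdd' C (-(n + 1)) 1 (-n) (by omega)).app Y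
  have hfe : f⟦-n⟧' ≫ e.hom = 0 := w.orthogonal hX hY _
  apply (shiftFunctor C (-n)).map_injective
  rw [← cancel_mono e.hom, hfe, Functor.map_zero, zero_comp]

lemma le_subset_le_succ (n : ℤ) : w.le n ⊆ w.le (n + 1) := fun X hX =>
  w.mem_LE_of_iso ((shiftFunctorAdd' C (-n) (-1) (-(n + 1)) (by omega)).app X) (w.shift_LE _ hX)

lemma ge_succ_subset_ge (n : ℤ) : w.ge (n + 1) ⊆ w.ge n := fun X hX =>
  w.mem_GE_of_iso ((shiftFunctorAdd' C (-(n + 1)) 1 (-n) (by omega)).app X) (w.shift_GE _ hX)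

lemma monotone_le : Monotone w.le := monotone_int_of_le_succ w.le_subset_le_succ

lemma antitone_ge : Antitone w.ge := antitone_int_of_succ_le w.ge_succ_subset_ge

lemma shift_one_mem_le {n : ℤ} {X : C} (h : X ∈ w.le n) : X⟦(1 : ℤ)⟧ ∈ w.le (n + 1) :=
  w.mem_LE_of_iso ((shiftFunctorAdd' C 1 (-(n + 1)) (-n) (by omega)).symm.app X) h

lemma shift_neg_one_mem_ge {n : ℤ} {X : C} (h : X ∈ w.ge (n + 1)) : X⟦(-1 : ℤ)⟧ ∈ w.ge n :=
  w.mem_GE_of_iso ((shiftFunctorAdd' C (-1) (-n) (-(n + 1)) (by omega)).symm.app X) h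

lemma exists_decomp_at (M : C) (n : ℤ) :
    ∃ (B A : C) (f : B ⟶ M) (g : M ⟶ A) (h : A ⟶ B⟦(1 : ℤ)⟧),
      Triangle.mk f g h ∈ distTriang C ∧ B ∈ w.le n ∧ A ∈ w.ge (n + 1) := by
  obtain ⟨B, A, f, g, h, hT, hB, hA⟩ := w.exists_decomp (M⟦-n⟧)
  let T := (Triangle.shiftFunctor C n).obj (Triangle.mk f g h)
  let e : T.obj₂ ≅ M := (shiftFunctorCompIsoId C (-n) n (by omega)).app M
  have h₁ : (T.mor₁ ≫ e.hom) ≫ e.inv = 𝟙 T.obj₁ ≫ T.mor₁ := by simp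
  have h₃ : T.mor₃ ≫ (𝟙 T.obj₁)⟦(1 : ℤ)⟧' = 𝟙 T.obj₃ ≫ T.mor₃ := by simp
  refine ⟨T.obj₁, T.obj₃, T.mor₁ ≫ e.hom, e.inv ≫ T.mor₂, T.mor₃, ?_, ?_, ?_⟩
  · exact isomorphic_distinguished _ (Triangle.shift_distinguished _ hT n) _
      (Triangle.isoMk _ _ (Iso.refl _) e.symm (Iso.refl _) h₁ (Category.comp_id _) h₃)
  · exact w.mem_LE_of_iso ((shiftFunctorCompIsoId C n (-n) (by omega)).app B) hB
  · exact w.mem_GE_of_iso ((shiftFunctorAdd' C n (-(n + 1)) (-1) (by omega)).symm.app A) hA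

lemma mem_ge_of_forall_hom_eq_zero {n : ℤ} {Z : C}
    (h : ∀ X ∈ w.le n, ∀ f : X ⟶ Z, f = 0) : Z ∈ w.ge (n + 1) := by
  obtain ⟨B, A, f, g, _, hT, hB, hA⟩ := w.exists_decomp_at Z n
  obtain ⟨r, hr⟩ := Triangle.yoneda_exact₂ _ hT (𝟙 Z)
    (show f ≫ 𝟙 Z = 0 by rw [h B hB f, zero_comp])
  exact w.retract_mem_ge ⟨g, r, hr.symm⟩ hA

lemma mem_le_of_forall_hom_eq_zero {n : ℤ} {Z : C}
    (h : ∀ Y ∈ w.ge (n + 1), ∀ f : Z ⟶ Y, f = 0) : Z ∈ w.le n := by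
  obtain ⟨B, A, f, g, _, hT, hB, hA⟩ := w.exists_decomp_at Z n
  obtain ⟨s, hs⟩ := Triangle.coyoneda_exact₂ _ hT (𝟙 Z)
    (show 𝟙 Z ≫ g = 0 by rw [h A hA g, comp_zero])
  exact w.retract_mem_le ⟨s, f, hs.symm⟩ hB

lemma mem_le_of_distTriang {n : ℤ} (T : Triangle C) (hT : T ∈ distTriang C)
    (h₁ : T.obj₁ ∈ w.le (n - 1)) (h₂ : T.obj₂ ∈ w.le n) : T.obj₃ ∈ w.le n := by
  have h₁' : T.obj₁⟦(1 : ℤ)⟧ ∈ w.le n := by simpa using w.shift_one_mem_le h₁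
  refine w.mem_le_of_forall_hom_eq_zero fun Y hY φ => ?_
  obtain ⟨ψ, rfl⟩ := Triangle.yoneda_exact₃ _ hT φ (w.eq_zero_of_mem_le_of_mem_ge h₂ hY _)
  rw [w.eq_zero_of_mem_le_of_mem_ge h₁' hY ψ, comp_zero]

section Decomposition

variable {n : ℤ} {M B A : C} {f : B ⟶ M} {g : M ⟶ A} {h : A ⟶ B⟦(1 : ℤ)⟧}
  (hT : Triangle.mk f g h ∈ distTriang C)
include hT

lemma exists_lift_of_decomp (hA : A ∈ w.ge (n + 1)) {X : C} (hX : X ∈ w.le n) (φ : X ⟶ M) :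
    ∃ ψ : X ⟶ B, ψ ≫ f = φ := by
  obtain ⟨ψ, hψ⟩ := Triangle.coyoneda_exact₂ _ hT φ (w.eq_zero_of_mem_le_of_mem_ge hX hA _)
  exact ⟨ψ, hψ.symm⟩

/-- `Hom(X, A⟦-1⟧) = 0` makes composition with `f` injective on `Hom(X, B)`. -/
lemma eq_of_comp_eq_of_decomp (hA : A ∈ w.ge (n + 2)) {X : C} (hX : X ∈ w.le n) {ψ₁ ψ₂ : X ⟶ B}
    (hψ : ψ₁ ≫ f = ψ₂ ≫ f) : ψ₁ = ψ₂ := by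
  have hA' : A⟦(-1 : ℤ)⟧ ∈ w.ge (n + 1) := w.shift_neg_one_mem_ge (by simpa [add_assoc] using hA)
  obtain ⟨χ, hχ⟩ := Triangle.coyoneda_exact₂ _ (inv_rot_of_distTriang _ hT) (ψ₁ - ψ₂)
    (show (ψ₁ - ψ₂) ≫ f = 0 by rw [Preadditive.sub_comp, hψ, sub_self])
  rw [← sub_eq_zero, hχ, w.eq_zero_of_mem_le_of_mem_ge hX hA' χ]
  exact zero_comp

lemma existsUnique_lift_of_decomp (hA : A ∈ w.ge (n + 2)) {X : C} (hX : X ∈ w.le n)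
    (φ : X ⟶ M) : ∃! ψ : X ⟶ B, ψ ≫ f = φ := by
  obtain ⟨ψ, hψ⟩ := w.exists_lift_of_decomp hT (w.antitone_ge (by omega) hA) hX φ
  exact ⟨ψ, hψ, fun ψ' hψ' => w.eq_of_comp_eq_of_decomp hT hA hX (hψ'.trans hψ.symm)⟩

end Decomposition

lemma cone_mem_ge {j : ℤ} {M Bj Aj Bi Ai Z : C}
    {fj : Bj ⟶ M} {gj : M ⟶ Aj} {hj : Aj ⟶ Bj⟦(1 : ℤ)⟧}
    (hTj : Triangle.mk fj gj hj ∈ distTriang C) (hAj : Aj ∈ w.ge (j + 1))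
    {fi : Bi ⟶ M} {gi : M ⟶ Ai} {hi : Ai ⟶ Bi⟦(1 : ℤ)⟧}
    (hTi : Triangle.mk fi gi hi ∈ distTriang C) (hAi : Ai ∈ w.ge (j + 2))
    {c : Bj ⟶ Bi} (hc : c ≫ fi = fj) {u : Bi ⟶ Z} {v : Z ⟶ Bj⟦(1 : ℤ)⟧}
    (hT : Triangle.mk c u v ∈ distTriang C) : Z ∈ w.ge (j + 1) := by
  have hvc : v ≫ c⟦(1 : ℤ)⟧' = 0 := comp_distTriang_mor_zero₃₁ _ hT
  have hcu : c ≫ u = 0 := comp_distTriang_mor_zero₁₂ _ hT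
  obtain ⟨ψ, hψ⟩ : ∃ ψ : Z ⟶ Aj, v = ψ ≫ hj := Triangle.coyoneda_exact₁ _ hTj v <|
    show v ≫ fj⟦(1 : ℤ)⟧' = 0 by rw [← hc, Functor.map_comp, ← Category.assoc, hvc, zero_comp]
  refine w.mem_ge_of_forall_hom_eq_zero fun X hX φ => ?_
  obtain ⟨χ, rfl⟩ : ∃ χ : X ⟶ Bi, φ = χ ≫ u := Triangle.coyoneda_exact₃ _ hT φ <|
    show φ ≫ v = 0 by
      rw [hψ, ← Category.assoc, w.eq_zero_of_mem_le_of_mem_ge hX hAj (φ ≫ ψ), zero_comp]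
  obtain ⟨α, hα⟩ := w.exists_lift_of_decomp hTj hAj hX (χ ≫ fi)
  have hχ : χ = α ≫ c := w.eq_of_comp_eq_of_decomp hTi hAi hX (by rw [Category.assoc, hc, hα])
  rw [hχ, Category.assoc, hcu, comp_zero]

end WeightStructure

theorem stmt_4 (w : WeightStructure C) (M : C) (j i : ℤ) (hji : j < i)
    (Bj Aj : C) (fj : Bj ⟶ M) (gj : M ⟶ Aj) (hj : Aj ⟶ Bj⟦(1 : ℤ)⟧)
    (hTj : Triangle.mk fj gj hj ∈ distTriang C)
    (hBj : Bj ∈ w.le j) (hAj : Aj ∈ w.ge (j + 1))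
    (Bi Ai : C) (fi : Bi ⟶ M) (gi : M ⟶ Ai) (hi : Ai ⟶ Bi⟦(1 : ℤ)⟧)
    (hTi : Triangle.mk fi gi hi ∈ distTriang C)
    (hBi : Bi ∈ w.le i) (hAi : Ai ∈ w.ge (i + 1)) :
    (∃! c : Bj ⟶ Bi, c ≫ fi = fj) ∧
    ∀ (c : Bj ⟶ Bi), c ≫ fi = fj →
      ∀ (Z : C) (u : Bi ⟶ Z) (v : Z ⟶ Bj⟦(1 : ℤ)⟧),
        (Triangle.mk c u v ∈ distTriang C) → Z ∈ w.ge (j + 1) ∧ Z ∈ w.le i := by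
  have hAi' : Ai ∈ w.ge (j + 2) := w.antitone_ge (by omega) hAi
  refine ⟨w.existsUnique_lift_of_decomp hTi hAi' hBj fj, fun c hc Z u v hT => ⟨?_, ?_⟩⟩
  · exact w.cone_mem_ge hTj hAj hTi hAi' hc hT
  · exact w.mem_le_of_distTriang _ hT (w.monotone_le (by omega) hBj) hBi
end

section
/- Let C and D be triangulated categories endowed with weight structures w and v respectively, and let F : C → D and G : D → C be exact functors with F left adjoint to G. Then F is left weight-exact (i.e., F(C_{w≤0}) ⊆ D_{v≤0}) if and only if G is right weight-exact (i.e., G(D_{v≥0}) ⊆ C_{w≥0}). -/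
open CategoryTheory CategoryTheory.Limits CategoryTheory.Pretriangulated

universe v u v₂ u₂

variable (C : Type u) [Category.{v} C] [HasZeroObject C] [Preadditive C] [HasShift C ℤ]
  [∀ n : ℤ, (shiftFunctor C n).Additive] [Pretriangulated C]

variable {C}

/-! Adjunction and the shift-compatibility of `G` identify `Hom(F X, Y[1])` with `Hom(X, (G Y)[1])`,
so the orthogonality `F(C_{w≤0}) ⊥ D_{v≥0}[1]` is the same condition as `C_{w≤0} ⊥ G(D_{v≥0})[1]`.
By the characterisations `C_{w≥0} = (C_{w≤-1})^⊥` and `C_{w≤0} = ^⊥(C_{w≥1})` (obtained from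
weight decompositions, which split when the relevant map vanishes), the first condition says that
`F` is left weight-exact and the second that `G` is right weight-exact. -/

lemma IsRetract.of_retract {C : Type u} [Category.{v} C] {X Y : C} (h : Retract X Y) :
    IsRetract X Y :=
  ⟨h.i, h.r, h.retract⟩

namespace WeightStructure

variable {C : Type u} [Category.{v} C] [HasZeroObject C] [Preadditive C] [HasShift C ℤ]
  [∀ n : ℤ, (shiftFunctor C n).Additive] [Pretriangulated C] (w : WeightStructure C)

lemma subsingleton_hom {X Y : C} (hX : X ∈ w.LE) (hY : Y ∈ w.GE) :
    Subsingleton (X ⟶ Y⟦(1 : ℤ)⟧) :=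
  ⟨fun f g => (w.orthogonal hX hY f).trans (w.orthogonal hX hY g).symm⟩

lemma mem_GE_iff (Y : C) : Y ∈ w.GE ↔ ∀ X ∈ w.LE, Subsingleton (X ⟶ Y⟦(1 : ℤ)⟧) := by
  refine ⟨fun hY X hX => w.subsingleton_hom hX hY, fun h => ?_⟩
  obtain ⟨B, A, f, g, δ, hT, hB, hA⟩ := w.exists_decomp (Y⟦(1 : ℤ)⟧)
  have : Subsingleton (B ⟶ Y⟦(1 : ℤ)⟧) := h B hB
  obtain ⟨r, hr⟩ := Triangle.yoneda_exact₂ _ hT (𝟙 _)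
    (by rw [Category.comp_id]; exact Subsingleton.elim f 0)
  have hYA : Retract (Y⟦(1 : ℤ)⟧) A := ⟨g, r, hr.symm⟩
  exact w.retract_mem_GE (IsRetract.of_retract <|
    (shiftShiftNeg Y (1 : ℤ)).symm.retract.trans (hYA.map (shiftFunctor C (-1 : ℤ)))) hA

lemma mem_LE_iff (X : C) : X ∈ w.LE ↔ ∀ Y ∈ w.GE, Subsingleton (X ⟶ Y⟦(1 : ℤ)⟧) := by
  refine ⟨fun hX Y hY => w.subsingleton_hom hX hY, fun h => ?_⟩
  obtain ⟨B, A, f, g, δ, hT, hB, hA⟩ := w.exists_decomp X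
  have hg : g = 0 := by
    have : Subsingleton (X ⟶ A⟦(-1 : ℤ)⟧⟦(1 : ℤ)⟧) := h _ hA
    rw [← cancel_mono (shiftNegShift A (1 : ℤ)).inv, zero_comp]
    exact Subsingleton.elim _ _
  obtain ⟨s, hs⟩ := Triangle.coyoneda_exact₂ _ hT (𝟙 _) (by rw [Category.id_comp]; exact hg)
  exact w.retract_mem_LE ⟨s, f, hs.symm⟩ hB

end WeightStructure

def CategoryTheory.Adjunction.homShiftEquiv {C : Type u} [Category.{v} C] [HasShift C ℤ]
    {D : Type u₂} [Category.{v₂} D] [HasShift D ℤ] {F : C ⥤ D} {G : D ⥤ C} [G.CommShift ℤ]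
    (adj : F ⊣ G) (X : C) (Y : D) (n : ℤ) :
    (F.obj X ⟶ Y⟦n⟧) ≃ (X ⟶ (G.obj Y)⟦n⟧) :=
  (adj.homEquiv X (Y⟦n⟧)).trans ((G.commShiftIso n).app Y).homToEquiv

theorem stmt_6 {D : Type u₂} [Category.{v₂} D] [HasZeroObject D] [Preadditive D] [HasShift D ℤ]
    [∀ n : ℤ, (shiftFunctor D n).Additive] [Pretriangulated D]
    (w : WeightStructure C) (v : WeightStructure D)
    (F : C ⥤ D) (G : D ⥤ C) [F.CommShift ℤ] [F.IsTriangulated]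
    [G.CommShift ℤ] [G.IsTriangulated] (adj : F ⊣ G) :
    (∀ X ∈ w.LE, F.obj X ∈ v.LE) ↔ (∀ Y ∈ v.GE, G.obj Y ∈ w.GE) := by
  have orth_iff (X : C) (Y : D) : Subsingleton (F.obj X ⟶ Y⟦(1 : ℤ)⟧) ↔
      Subsingleton (X ⟶ (G.obj Y)⟦(1 : ℤ)⟧) :=
    (adj.homShiftEquiv X Y 1).subsingleton_congr
  constructor
  · intro hF Y hY
    rw [w.mem_GE_iff]
    exact fun X hX => (orth_iff X Y).mp ((v.mem_LE_iff _).mp (hF X hX) Y hY)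
  · intro hG X hX
    rw [v.mem_LE_iff]
    exact fun Y hY => (orth_iff X Y).mpr ((w.mem_LE_iff X).mp hX _ (hG Y hY))
end

section
/- Let C be a Karoubian triangulated category with a weight structure w, let i ∈ ℤ, and let M belong to the envelope of a class {M_j}_{j∈J} of objects of C (the envelope is the smallest class containing the M_j that is closed under extensions, retracts, and contains 0). Fix for each j an (i−1)-weight decomposition w_{≤i−1}M_j → M_j → w_{≥i}M_j. Then M ∈ C_{w≥i} if and only if Hom(w_{≤i−1}M_j, M) = 0 for all j. -/
open CategoryTheory CategoryTheory.Limits CategoryTheory.Pretriangulated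

universe v u v₂ u₂

variable (C : Type u) [Category.{v} C] [HasZeroObject C] [Preadditive C] [HasShift C ℤ]
  [∀ n : ℤ, (shiftFunctor C n).Additive] [Pretriangulated C]

variable {C}

/-!
The forward implication is the orthogonality `C_{w≤i-1} ⊥ C_{w≥i}`. Conversely, suppose
`Hom(w_{≤i-1}M_j, M) = 0` for all `j`, and let `K` be the class of objects `E ∈ C_{w≤i-1}` with
`Hom(E, M) = 0`. Induction on the envelope shows that for every object `N` of the envelope, every
morphism `B ⟶ N` with `B ∈ C_{w≤i-1}` factors through an object of `K`: for `N = M_j` it factors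
through `w_{≤i-1}M_j` by orthogonality, and the class of such `N` is closed under zero objects,
retracts and extensions. Taking `N = M` gives `Hom(C_{w≤i-1}, M) = 0`, which forces `M ∈ C_{w≥i}`
because the first map of a weight decomposition of `M` then vanishes.
-/

lemma IsRetract.map {D E : Type*} [Category D] [Category E] {X Y : D} (hXY : IsRetract X Y)
    (F : D ⥤ E) : IsRetract (F.obj X) (F.obj Y) := by
  obtain ⟨ι, r, hir⟩ := hXY
  exact ⟨F.map ι, F.map r, by rw [← F.map_comp, hir, F.map_id]⟩

lemma IsRetract.of_iso {D : Type*} [Category D] {X Y : D} (e : X ≅ Y) : IsRetract X Y :=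
  ⟨e.hom, e.inv, e.hom_inv_id⟩

lemma IsRetract.of_iso_left {D : Type*} [Category D] {X X' Y : D} (e : X ≅ X')
    (hXY : IsRetract X' Y) : IsRetract X Y := by
  obtain ⟨ι, r, hir⟩ := hXY
  exact ⟨e.hom ≫ ι, r ≫ e.inv, by simp [reassoc_of% hir]⟩

lemma isRetract_obj₂_obj₃_of_mor₁_eq_zero (T : Triangle C) (hT : T ∈ distTriang C)
    (h : T.mor₁ = 0) : IsRetract T.obj₂ T.obj₃ := by
  obtain ⟨r, hr⟩ := Triangle.yoneda_exact₂ T hT (𝟙 T.obj₂) (by simp [h])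
  exact ⟨T.mor₂, r, hr.symm⟩

lemma hom_obj₂_eq_zero_of_distTriang (T : Triangle C) (hT : T ∈ distTriang C) {M : C}
    (h₁ : ∀ ψ : T.obj₁ ⟶ M, ψ = 0) (h₃ : ∀ ψ : T.obj₃ ⟶ M, ψ = 0) (ψ : T.obj₂ ⟶ M) :
    ψ = 0 := by
  obtain ⟨χ, rfl⟩ := Triangle.yoneda_exact₂ T hT ψ (h₁ _)
  rw [h₃ χ, comp_zero]

namespace WeightStructure

variable (w : WeightStructure C)

lemma mem_LE_of_hom_eq_zero {X : C} (hX : ∀ Y ∈ w.GE, ∀ φ : X ⟶ Y⟦(1 : ℤ)⟧, φ = 0) :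
    X ∈ w.LE := by
  obtain ⟨B, A, f, g, h, hT, hB, hA⟩ := w.exists_decomp X
  have hg : g = 0 := by
    have e := (shiftFunctorCompIsoId C (-1 : ℤ) 1 (by norm_num)).app A
    rw [← Preadditive.IsIso.comp_right_eq_zero g e.inv]
    exact hX _ hA _
  obtain ⟨ι, hι⟩ := Triangle.coyoneda_exact₂ _ hT (𝟙 X) ((Category.id_comp g).trans hg)
  exact w.retract_mem_LE ⟨ι, f, hι.symm⟩ hB

lemma mem_LE_obj₂ (T : Triangle C) (hT : T ∈ distTriang C)
    (h₁ : T.obj₁ ∈ w.LE) (h₃ : T.obj₃ ∈ w.LE) : T.obj₂ ∈ w.LE := by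
  refine w.mem_LE_of_hom_eq_zero fun Y hY φ => ?_
  obtain ⟨ψ, rfl⟩ := Triangle.yoneda_exact₂ _ hT φ (w.orthogonal h₁ hY _)
  rw [w.orthogonal h₃ hY ψ, comp_zero]

lemma mem_le_obj₂ (T : Triangle C) (hT : T ∈ distTriang C) {n : ℤ}
    (h₁ : T.obj₁ ∈ w.le n) (h₃ : T.obj₃ ∈ w.le n) : T.obj₂ ∈ w.le n :=
  w.mem_LE_obj₂ _ (Triangle.shift_distinguished T hT (-n)) h₁ h₃

lemma shift_neg_one_mem_le {X : C} {n : ℤ} (hX : X ∈ w.le n) : X⟦(-1 : ℤ)⟧ ∈ w.le n :=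
  w.retract_mem_LE (IsRetract.of_iso ((shiftFunctorComm C (-1) (-n)).app X))
    (w.shift_LE _ hX)

lemma mem_le_obj₁ (T : Triangle C) (hT : T ∈ distTriang C) {n : ℤ}
    (h₂ : T.obj₂ ∈ w.le n) (h₃ : T.obj₃ ∈ w.le n) : T.obj₁ ∈ w.le n :=
  w.mem_le_obj₂ _ (inv_rot_of_distTriang T hT) (w.shift_neg_one_mem_le h₃) h₂

lemma mem_le_of_isZero {X : C} (hX : IsZero X) (n : ℤ) : X ∈ w.le n := by
  obtain ⟨B, -, -, -, -, -, hB, -⟩ := w.exists_decomp X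
  exact w.retract_mem_LE ⟨0, 0, ((shiftFunctor C (-n)).map_isZero hX).eq_of_src _ _⟩ hB

lemma hom_eq_zero_of_mem_le_of_mem_ge {X Y : C} {n : ℤ} (hX : X ∈ w.le (n - 1))
    (hY : Y ∈ w.ge n) (φ : X ⟶ Y) : φ = 0 := by
  have e := (shiftFunctorAdd' C (-n) 1 (-(n - 1)) (by ring)).app Y
  rw [← (shiftFunctor C (-(n - 1))).map_eq_zero_iff,
    ← Preadditive.IsIso.comp_right_eq_zero _ e.hom]
  exact w.orthogonal hX hY _

lemma mem_ge_of_hom_eq_zero {M : C} {n : ℤ}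
    (hM : ∀ B ∈ w.le (n - 1), ∀ φ : B ⟶ M, φ = 0) : M ∈ w.ge n := by
  obtain ⟨B, A, f, g, h, hT, hB, hA⟩ := w.exists_decomp (M⟦1 - n⟧)
  have hf : f = 0 := by
    have e := (shiftFunctorCompIsoId C (1 - n) (n - 1) (by ring)).app M
    rw [← (shiftFunctor C (n - 1)).map_eq_zero_iff,
      ← Preadditive.IsIso.comp_right_eq_zero _ e.hom]
    exact hM _ (w.retract_mem_LE (IsRetract.of_iso
      ((shiftFunctorCompIsoId C (n - 1) (-(n - 1)) (by ring)).app B)) hB) _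
  have hret := (isRetract_obj₂_obj₃_of_mor₁_eq_zero _ hT hf).map (shiftFunctor C (-1 : ℤ))
  exact w.retract_mem_GE
    (hret.of_iso_left ((shiftFunctorAdd' C (1 - n) (-1) (-n) (by ring)).app M)) hA

end WeightStructure

def MapsFactorThrough {D : Type*} [Category D] (A K : Set D) (N : D) : Prop :=
  ∀ B ∈ A, ∀ φ : B ⟶ N, ∃ E ∈ K, ∃ (α : B ⟶ E) (β : E ⟶ N), α ≫ β = φ

namespace MapsFactorThrough

section Category

variable {D : Type*} [Category D] {A K : Set D}

lemma of_isZero (hK : ∀ Z : D, IsZero Z → Z ∈ K) {N : D} (hN : IsZero N) :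
    MapsFactorThrough A K N :=
  fun _ _ φ => ⟨N, hK N hN, φ, 𝟙 N, Category.comp_id φ⟩

lemma of_isRetract {X Y : D} (hXY : IsRetract X Y)
    (hY : MapsFactorThrough A K Y) : MapsFactorThrough A K X := by
  obtain ⟨ι, r, hir⟩ := hXY
  intro B hB φ
  obtain ⟨E, hE, α, β, hαβ⟩ := hY B hB (φ ≫ ι)
  exact ⟨E, hE, α, β ≫ r, by rw [reassoc_of% hαβ, hir, Category.comp_id]⟩

end Category

variable {A K : Set C}

lemma obj₂
    (hK : ∀ T ∈ distTriang C, T.obj₁ ∈ K → T.obj₃ ∈ K → T.obj₂ ∈ K)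
    (hA : ∀ T ∈ distTriang C, T.obj₂ ∈ A → T.obj₃ ∈ K → T.obj₁ ∈ A)
    (T : Triangle C) (hT : T ∈ distTriang C)
    (h₁ : MapsFactorThrough A K T.obj₁) (h₃ : MapsFactorThrough A K T.obj₃) :
    MapsFactorThrough A K T.obj₂ := by
  -- Factor `φ ≫ T.mor₂` through `E₃ ∈ K`; the induced map from the fibre `F` of `B ⟶ E₃` to
  -- `T.obj₁` factors through `E₁ ∈ K`, and gluing `E₁` and `E₃` gives `E ∈ K` through which `φ`
  -- factors up to a map `B ⟶ T.obj₁`, which in turn factors through `E₀ ∈ K`.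
  intro B hB φ
  obtain ⟨E₃, hE₃, a, b, hab⟩ := h₃ B hB (φ ≫ T.mor₂)
  obtain ⟨F, f, h, hF⟩ := distinguished_cocone_triangle₁ a
  obtain ⟨ζ, -, hζ⟩ : ∃ ζ : F ⟶ T.obj₁, _ ∧ h ≫ ζ⟦(1 : ℤ)⟧' = b ≫ T.mor₃ :=
    complete_distinguished_triangle_morphism₁ _ T hF hT φ b hab
  obtain ⟨E₁, hE₁, c, d, rfl⟩ := h₁ F (hA _ hF hB hE₃) ζ
  obtain ⟨E, e, p, hE⟩ := distinguished_cocone_triangle₂ (h ≫ c⟦(1 : ℤ)⟧')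
  have hχ : (h ≫ c⟦(1 : ℤ)⟧') ≫ d⟦(1 : ℤ)⟧' = b ≫ T.mor₃ := by
    rw [Category.assoc, ← Functor.map_comp, hζ]
  obtain ⟨q, -, hq⟩ : ∃ q : E ⟶ T.obj₂, _ ∧ p ≫ b = q ≫ T.mor₂ :=
    complete_distinguished_triangle_morphism₂ _ T hE hT d b hχ
  have haχ : a ≫ h ≫ c⟦(1 : ℤ)⟧' = 0 := by
    rw [← Category.assoc, show a ≫ h = 0 from comp_distTriang_mor_zero₂₃ _ hF, zero_comp]
  obtain ⟨ρ, hρ⟩ : ∃ ρ : B ⟶ E, a = ρ ≫ p := Triangle.coyoneda_exact₃ _ hE a haχ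
  obtain ⟨σ, hσ⟩ := Triangle.coyoneda_exact₂ _ hT (φ - ρ ≫ q) (by
    rw [Preadditive.sub_comp, Category.assoc, ← hq, ← hab, hρ, Category.assoc, sub_self])
  obtain ⟨E₀, hE₀, c₀, d₀, rfl⟩ := h₁ B hB σ
  refine ⟨E ⊞ E₀, hK _ (binaryBiproductTriangle_distinguished E E₀)
      (hK _ hE hE₁ hE₃) hE₀, biprod.lift ρ c₀, biprod.desc q (d₀ ≫ T.mor₁), ?_⟩
  rw [biprod.lift_desc, ← Category.assoc, ← hσ, add_sub_cancel]

end MapsFactorThrough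

lemma Envelope.mapsFactorThrough {A K D : Set C}
    (hK₀ : ∀ Z : C, IsZero Z → Z ∈ K)
    (hK : ∀ T ∈ distTriang C, T.obj₁ ∈ K → T.obj₃ ∈ K → T.obj₂ ∈ K)
    (hA : ∀ T ∈ distTriang C, T.obj₂ ∈ A → T.obj₃ ∈ K → T.obj₁ ∈ A)
    (hD : ∀ X ∈ D, MapsFactorThrough A K X) {N : C} (hN : Envelope D N) :
    MapsFactorThrough A K N := by
  induction hN with
  | of X hX => exact hD X hX
  | zero Z hZ => exact .of_isZero hK₀ hZ
  | ext T hT _ _ ih₁ ih₃ => exact .obj₂ hK hA T hT ih₁ ih₃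
  | retract X Y hXY _ ih => exact ih.of_isRetract hXY

theorem stmt_7_general (w : WeightStructure C) (i : ℤ)
    {J : Type*} (Mf : J → C) (M : C) (hM : Envelope (Set.range Mf) M)
    (L G : J → C) (f : ∀ j, L j ⟶ Mf j) (g : ∀ j, Mf j ⟶ G j)
    (h : ∀ j, G j ⟶ (L j)⟦(1 : ℤ)⟧)
    (hT : ∀ j, Triangle.mk (f j) (g j) (h j) ∈ distTriang C)
    (hL : ∀ j, L j ∈ w.le (i - 1)) (hG : ∀ j, G j ∈ w.ge i) :
    M ∈ w.ge i ↔ ∀ j, ∀ φ : L j ⟶ M, φ = 0 := by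
  refine ⟨fun hMi j => w.hom_eq_zero_of_mem_le_of_mem_ge (hL j) hMi, fun H => ?_⟩
  have hFactor : MapsFactorThrough (w.le (i - 1))
      (w.le (i - 1) ∩ {E | ∀ ψ : E ⟶ M, ψ = 0}) M := by
    refine hM.mapsFactorThrough ?_ ?_ ?_ ?_
    · exact fun Z hZ => ⟨w.mem_le_of_isZero hZ _, fun ψ => hZ.eq_of_src ψ 0⟩
    · exact fun T hT h₁ h₃ => ⟨w.mem_le_obj₂ T hT h₁.1 h₃.1,
        hom_obj₂_eq_zero_of_distTriang T hT h₁.2 h₃.2⟩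
    · exact fun T hT h₂ h₃ => w.mem_le_obj₁ T hT h₂ h₃.1
    rintro _ ⟨j, rfl⟩ B hB φ
    obtain ⟨α, hα⟩ := Triangle.coyoneda_exact₂ _ (hT j) φ
      (w.hom_eq_zero_of_mem_le_of_mem_ge hB (hG j) _)
    exact ⟨L j, ⟨hL j, H j⟩, α, f j, hα.symm⟩
  refine w.mem_ge_of_hom_eq_zero fun B hB φ => ?_
  obtain ⟨E, ⟨-, hEM⟩, α, β, rfl⟩ := hFactor B hB φ
  rw [hEM β, comp_zero]

theorem stmt_7 (w : WeightStructure C) [IsIdempotentComplete C] (i : ℤ)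
    {J : Type*} (Mf : J → C) (M : C) (hM : Envelope (Set.range Mf) M)
    (L G : J → C) (f : ∀ j, L j ⟶ Mf j) (g : ∀ j, Mf j ⟶ G j)
    (h : ∀ j, G j ⟶ (L j)⟦(1 : ℤ)⟧)
    (hT : ∀ j, Triangle.mk (f j) (g j) (h j) ∈ distTriang C)
    (hL : ∀ j, L j ∈ w.le (i - 1)) (hG : ∀ j, G j ∈ w.ge i) :
    M ∈ w.ge i ↔ ∀ j, ∀ φ : L j ⟶ M, φ = 0 :=
  stmt_7_general w i Mf M hM L G f g h hT hL hG
end
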